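/- Let (L,B) be a unimodular integral lattice of rank 10 and let R ⊆ L be a sublattice of rank 9 on which B is nondegenerate and whose discriminant group disc(R) is isomorphic to (ℤ/7ℤ)³. Then the saturation R̄ of R in L is an overlattice of R of index exactly 7, i.e. the index [R̄ : R] of R in R̄ equals 7. -/

import Mathlib

open TensorProduct

noncomputable section

/-- The natural map `N → ℚ ⊗[ℤ] N`, `x ↦ 1 ⊗ x`. -/
def toQ (N : Type) [AddCommGroup N] : N →ₗ[ℤ] ℚ ⊗[ℤ] N :=
  TensorProduct.mk ℤ ℚ N 1

/-- The dual lattice `N* = {x ∈ N ⊗ ℚ : B_ℚ(x,y) ∈ ℤ for all y ∈ N}`. -/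
def dualLattice {N : Type} [AddCommGroup N]
    (B : LinearMap.BilinForm ℤ N) : Submodule ℤ (ℚ ⊗[ℤ] N) where
  carrier := {x | ∀ y : N, ∃ n : ℤ, B.baseChange ℚ x (toQ N y) = n}
  zero_mem' := fun y => ⟨0, by simp⟩
  add_mem' := by
    intro x x' hx hx' y
    obtain ⟨n, hn⟩ := hx y
    obtain ⟨n', hn'⟩ := hx' y
    exact ⟨n + n', by rw [map_add, LinearMap.add_apply, hn, hn']; push_cast; ring⟩
  smul_mem' := by
    intro c x hx y
    obtain ⟨n, hn⟩ := hx y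
    refine ⟨c * n, ?_⟩
    rw [← Int.cast_smul_eq_zsmul ℚ c x, map_smul, LinearMap.smul_apply, hn,
      smul_eq_mul]
    push_cast; ring

/-- `disc(N) = N*/N`, the discriminant group of a lattice. -/
abbrev disc {N : Type} [AddCommGroup N] (B : LinearMap.BilinForm ℤ N) :=
  (dualLattice B) ⧸ ((LinearMap.range (toQ N)).comap (dualLattice B).subtype)

/-- The saturation (primitive closure) `S̄ = {x ∈ L : n • x ∈ S for some n ≥ 1}`. -/
def saturation {L : Type} [AddCommGroup L] (S : Submodule ℤ L) :
    Submodule ℤ L where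
  carrier := {x | ∃ n : ℤ, 1 ≤ n ∧ n • x ∈ S}
  zero_mem' := ⟨1, le_refl 1, by simp⟩
  add_mem' := by
    rintro x y ⟨n, hn, hnx⟩ ⟨m, hm, hmy⟩
    refine ⟨n * m, one_le_mul_of_one_le_of_one_le hn hm, ?_⟩
    have : (n * m) • (x + y) = m • (n • x) + n • (m • y) := by
      rw [smul_add, mul_comm n m, mul_smul, mul_comm m n, mul_smul]
    rw [this]
    exact S.add_mem (S.smul_mem m hnx) (S.smul_mem n hmy)
  smul_mem' := by
    rintro c x ⟨n, hn, hnx⟩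
    refine ⟨n, hn, ?_⟩
    rw [smul_comm]
    exact S.smul_mem c hnx

/-!
Let `φ : L → R^∨` be `x ↦ B(x, ·)|_R`, with kernel `K = R^⊥`, and let `P = [R̄ : R]`.
By unimodularity `φ(L)` is the image of the restriction `L^∨ → R^∨`, whose cokernel has
order `P` (Smith normal form). Since `φ⁻¹(B(R)) = R + K`, the chain `B(R) ⊆ φ(L) ⊆ R^∨`
gives `|disc R| = [L : R + K] · P`, and since `R̄ ∩ K = 0`, `[L : R + K] = P · [L : R̄ + K]`.
As `R̄` is primitive of corank one, `L / R̄` is cyclic, and `7` kills `disc R ⊇ L / (R + K)`,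
so `[L : R̄ + K]` divides `7`. Then `P² · [L : R̄ + K] = 7³` forces `P = 7`.
-/

lemma exists_intCast_smul_eq_toQ {S : Type} [AddCommGroup S] (x : ℚ ⊗[ℤ] S) :
    ∃ n : ℤ, n ≠ 0 ∧ ∃ s : S, (n : ℚ) • x = toQ S s := by
  obtain ⟨⟨s, n⟩, h⟩ :=
    IsLocalizedModule.surj (nonZeroDivisors ℤ) (TensorProduct.mk ℤ ℚ S 1) x
  exact ⟨n, nonZeroDivisors.coe_ne_zero n, s, by rw [Int.cast_smul_eq_zsmul]; exact h⟩

namespace LinearMap.BilinForm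

variable {S : Type} [AddCommGroup S] (C : LinearMap.BilinForm ℤ S)

lemma baseChange_toQ_toQ (s y : S) : C.baseChange ℚ (toQ S s) (toQ S y) = C s y := by
  change C.baseChange ℚ ((1 : ℚ) ⊗ₜ s) ((1 : ℚ) ⊗ₜ y) = _
  simp [baseChange_tmul]

lemma separatingLeft_baseChange_rat (hC : C.SeparatingLeft) :
    (C.baseChange ℚ).SeparatingLeft := by
  intro x hx
  obtain ⟨n, hn, s, hs⟩ := exists_intCast_smul_eq_toQ x
  have hs0 : s = 0 := hC s fun y => by
    have h : (C s y : ℚ) = 0 := by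
      rw [← baseChange_toQ_toQ, ← hs, map_smul, smul_apply, hx, smul_zero]
    exact_mod_cast h
  rw [hs0, map_zero, smul_eq_zero] at hs
  exact hs.resolve_left (by exact_mod_cast hn)

def dualLatticePairing (x : dualLattice C) (y : S) : ℤ := (x.2 y).choose

lemma cast_dualLatticePairing (x : dualLattice C) (y : S) :
    (C.dualLatticePairing x y : ℚ) = C.baseChange ℚ x (toQ S y) :=
  (x.2 y).choose_spec.symm

def dualLatticeToDual : dualLattice C →ₗ[ℤ] Module.Dual ℤ S where
  toFun x :=
    { toFun := C.dualLatticePairing x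
      map_add' := fun y z => Int.cast_injective (α := ℚ) <| by
        simp [cast_dualLatticePairing]
      map_smul' := fun c y => Int.cast_injective (α := ℚ) <| by
        simp [cast_dualLatticePairing] }
  map_add' x x' := LinearMap.ext fun y => Int.cast_injective (α := ℚ) <| by
    simp [cast_dualLatticePairing]
  map_smul' c x := LinearMap.ext fun y => Int.cast_injective (α := ℚ) <| by
    simp [cast_dualLatticePairing]

lemma dualLatticeToDual_apply (x : dualLattice C) (y : S) :
    C.dualLatticeToDual x y = C.dualLatticePairing x y := rfl

lemma dualLatticeToDual_toQ (s : S) (h : toQ S s ∈ dualLattice C) :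
    C.dualLatticeToDual ⟨toQ S s, h⟩ = C s :=
  LinearMap.ext fun y => Int.cast_injective (α := ℚ) <| by
    rw [dualLatticeToDual_apply, cast_dualLatticePairing, baseChange_toQ_toQ]

lemma toQ_mem_dualLattice (s : S) : toQ S s ∈ dualLattice C :=
  fun y => ⟨C s y, baseChange_toQ_toQ C s y⟩

lemma map_dualLatticeToDual_comap_range_toQ :
    ((LinearMap.range (toQ S)).comap (dualLattice C).subtype).map C.dualLatticeToDual =
      LinearMap.range C := by
  apply le_antisymm
  · rintro _ ⟨⟨_, hx⟩, ⟨s, rfl⟩, rfl⟩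
    exact ⟨s, (dualLatticeToDual_toQ C s hx).symm⟩
  · rintro _ ⟨s, rfl⟩
    exact ⟨⟨toQ S s, toQ_mem_dualLattice C s⟩, ⟨s, rfl⟩, dualLatticeToDual_toQ C s _⟩

variable [Module.Free ℤ S]

lemma dualLatticeToDual_injective (hC : C.SeparatingLeft) :
    Function.Injective C.dualLatticeToDual := by
  rw [← LinearMap.ker_eq_bot, LinearMap.ker_eq_bot']
  intro x hx
  let b := Module.Free.chooseBasis ℤ S
  have hx0 : C.baseChange ℚ x = 0 := (b.baseChange ℚ).ext fun i => by
    have h := cast_dualLatticePairing C x (b i)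
    rw [← dualLatticeToDual_apply, hx] at h
    rw [Module.Basis.baseChange_apply]
    exact h.symm
  exact Subtype.ext (separatingLeft_baseChange_rat C hC x fun z => by rw [hx0]; rfl)

variable [Module.Finite ℤ S]

lemma dualLatticeToDual_surjective (hC : C.SeparatingLeft) :
    Function.Surjective C.dualLatticeToDual := by
  classical
  intro f
  let b := Module.Free.chooseBasis ℤ S
  have hnd : (C.baseChange ℚ).Nondegenerate :=
    .ofSeparatingLeft (separatingLeft_baseChange_rat C hC)
  let x := ∑ i, (f (b i) : ℚ) • (C.baseChange ℚ).dualBasis hnd (b.baseChange ℚ) i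
  have hx :
      (C.baseChange ℚ x).restrictScalars ℤ ∘ₗ toQ S = Algebra.linearMap ℤ ℚ ∘ₗ f :=
    b.ext fun j => by
      have := apply_dualBasis_left hnd (b.baseChange ℚ)
      simp only [Module.Basis.baseChange_apply] at this
      change C.baseChange ℚ x ((1 : ℚ) ⊗ₜ b j) = (f (b j) : ℚ)
      simp [x, this]
  refine ⟨⟨x, fun y => ⟨f y, LinearMap.congr_fun hx y⟩⟩, LinearMap.ext fun y => ?_⟩
  exact Int.cast_injective (α := ℚ) <|
    (cast_dualLatticePairing C _ y).trans (LinearMap.congr_fun hx y)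

def discEquiv (hC : C.SeparatingLeft) :
    disc C ≃ₗ[ℤ] Module.Dual ℤ S ⧸ LinearMap.range C :=
  Submodule.Quotient.equiv _ _
    (LinearEquiv.ofBijective C.dualLatticeToDual
      ⟨C.dualLatticeToDual_injective hC, C.dualLatticeToDual_surjective hC⟩)
    C.map_dualLatticeToDual_comap_range_toQ

lemma index_range_eq_card_disc (hC : C.SeparatingLeft) :
    (LinearMap.range C).toAddSubgroup.index = Nat.card (disc C) :=
  Nat.card_congr (C.discEquiv hC).toEquiv.symm

lemma nsmul_mem_range (hC : C.SeparatingLeft) {m : ℕ} (hm : ∀ d : disc C, m • d = 0)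
    (g : Module.Dual ℤ S) : m • g ∈ LinearMap.range C := by
  rw [← Submodule.Quotient.mk_eq_zero, Submodule.Quotient.mk_smul]
  exact (C.discEquiv hC).symm.injective (by rw [map_nsmul, map_zero, hm])

end LinearMap.BilinForm

section Saturation

variable {L : Type} [AddCommGroup L]

lemma le_saturation (S : Submodule ℤ L) : S ≤ saturation S :=
  fun x hx => ⟨1, le_rfl, by rwa [one_smul]⟩

lemma mem_saturation_of_zsmul_mem {S : Submodule ℤ L} {n : ℤ} {x : L} (hn : n ≠ 0)
    (h : n • x ∈ S) : x ∈ saturation S := by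
  rcases hn.lt_or_gt with hn | hn
  · exact ⟨-n, by omega, by rw [neg_smul]; exact S.neg_mem h⟩
  · exact ⟨n, hn, h⟩

lemma disjoint_saturation [Module.IsTorsionFree ℤ L] {S K : Submodule ℤ L} (h : Disjoint S K) :
    Disjoint (saturation S) K := by
  rw [Submodule.disjoint_def] at h ⊢
  rintro x ⟨n, hn, hnx⟩ hx
  exact (smul_eq_zero.mp (h _ hnx (K.smul_mem n hx))).resolve_left (by omega)

end Saturation

lemma AddSubgroup.relIndex_sup_sup_of_disjoint {G : Type*} [AddCommGroup G]
    {H H' K : AddSubgroup G} (hH : H ≤ H') (hK : Disjoint H' K) :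
    (H ⊔ K).relIndex (H' ⊔ K) = H.relIndex H' := by
  rw [show H' ⊔ K = H' ⊔ (H ⊔ K) by rw [← sup_assoc, sup_eq_left.2 hH], relIndex_sup_right,
    ← inf_relIndex_right, sup_inf_assoc_of_le K hH, hK.symm.eq_bot, sup_bot_eq]

lemma Submodule.index_dvd_of_sup_span_singleton_eq_top {M : Type*} [AddCommGroup M]
    {N : Submodule ℤ M} {x : M} (hx : N ⊔ span ℤ {x} = ⊤) {m : ℕ} (hm : m • x ∈ N) :
    N.toAddSubgroup.index ∣ m := by
  have hgen : ∀ y : M ⧸ N, y ∈ AddSubgroup.zmultiples (N.mkQ x) := by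
    rintro ⟨y⟩
    obtain ⟨z, hz, w, hw, rfl⟩ := mem_sup.1 (hx ▸ mem_top : y ∈ N ⊔ span ℤ {x})
    obtain ⟨c, rfl⟩ := mem_span_singleton.1 hw
    refine ⟨c, ?_⟩
    change c • N.mkQ x = N.mkQ (z + c • x)
    rw [map_add, map_zsmul, N.mkQ_apply z, (Quotient.mk_eq_zero N).2 hz, zero_add]
  change Nat.card (M ⧸ N) ∣ m
  rw [← addOrderOf_eq_card_of_forall_mem_zmultiples hgen]
  exact addOrderOf_dvd_of_nsmul_eq_zero <| by
    rw [← map_nsmul, mkQ_apply, Quotient.mk_eq_zero]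
    exact hm

lemma Submodule.index_map {A M M' : Type*} [Ring A] [AddCommGroup M] [AddCommGroup M']
    [Module A M] [Module A M'] (f : M →ₗ[A] M') (N : Submodule A M) :
    (N.map f).toAddSubgroup.index =
      (N ⊔ LinearMap.ker f).toAddSubgroup.index * (LinearMap.range f).toAddSubgroup.index := by
  rw [map_toAddSubgroup, sup_toAddSubgroup, LinearMap.ker_toAddSubgroup,
    LinearMap.range_toAddSubgroup]
  exact AddSubgroup.index_map (H := N.toAddSubgroup) f.toAddMonoidHom

lemma Submodule.index_span_smul_basis {W : Type*} [AddCommGroup W] {n : ℕ}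
    (c : Module.Basis (Fin n) ℤ W) {a : Fin n → ℤ} (ha : ∀ i, a i ≠ 0) :
    (span ℤ (Set.range fun i => a i • c i)).toAddSubgroup.index = ∏ i, (a i).natAbs := by
  have hli : LinearIndependent ℤ fun i => a i • c i := by
    rw [Fintype.linearIndependent_iff]
    intro g hg i
    have := congrArg (fun w => c.repr w i) hg
    simpa [Finset.sum_apply, Finsupp.single_apply, ha i] using this
  let snf : Module.Basis.SmithNormalForm (span ℤ (Set.range fun i => a i • c i)) (Fin n) n :=
    ⟨c, .span hli, .refl _, a, fun i => by simp [Module.Basis.span_apply]⟩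
  simp [snf.toAddSubgroup_index_eq_pow_mul_prod, snf,
    Ideal.span_singleton_toAddSubgroup_eq_zmultiples, Int.index_zmultiples]

namespace Module.Basis.SmithNormalForm

open Submodule

variable {L : Type} {ι : Type*} [AddCommGroup L] {R : Submodule ℤ L} {n : ℕ}
  (snf : Basis.SmithNormalForm R ι n)

lemma a_ne_zero (i : Fin n) : snf.a i ≠ 0 := by
  intro h
  apply snf.bN.ne_zero i
  ext
  rw [snf.snf, h, zero_smul, ZeroMemClass.coe_zero]

lemma le_span_bM_comp_f : R ≤ span ℤ (Set.range (snf.bM ∘ snf.f)) := by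
  intro r hr
  suffices ∀ y : R, (y : L) ∈ span ℤ (Set.range (snf.bM ∘ snf.f)) from this ⟨r, hr⟩
  intro y
  rw [← snf.bN.sum_repr y, coe_sum]
  refine sum_mem fun i _ => ?_
  rw [Submodule.coe_smul, snf.snf, smul_smul]
  exact smul_mem _ _ (subset_span ⟨i, rfl⟩)

lemma saturation_eq : saturation R = span ℤ (Set.range (snf.bM ∘ snf.f)) := by
  apply le_antisymm
  · rintro x ⟨m, hm, hmx⟩
    have hmx := snf.le_span_bM_comp_f hmx
    rw [Set.range_comp, Basis.mem_span_image] at hmx ⊢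
    rwa [map_smul, Finsupp.support_smul_eq (by omega)] at hmx
  · refine span_le.2 (Set.range_subset_iff.2 fun i => ?_)
    exact mem_saturation_of_zsmul_mem (snf.a_ne_zero i) (snf.snf i ▸ (snf.bN i).2)

lemma relIndex_saturation :
    R.toAddSubgroup.relIndex (saturation R).toAddSubgroup = ∏ i, (snf.a i).natAbs := by
  let c : Basis (Fin n) ℤ (saturation R) :=
    (Basis.span (snf.bM.linearIndependent.comp snf.f snf.f.injective)).map
      (LinearEquiv.ofEq _ _ snf.saturation_eq.symm)
  let snf' : Basis.SmithNormalForm (R.comap (saturation R).subtype) (Fin n) n :=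
    ⟨c, snf.bN.map (comapSubtypeEquivOfLe (le_saturation R)).symm, .refl _, snf.a,
      fun i => Subtype.ext <| by simp [c, snf.snf, Basis.span_apply]⟩
  change (R.comap (saturation R).subtype).toAddSubgroup.index = _
  simp [snf'.toAddSubgroup_index_eq_pow_mul_prod, snf',
    Ideal.span_singleton_toAddSubgroup_eq_zmultiples, Int.index_zmultiples]

lemma dualMap_subtype_coord_f (i : Fin n) :
    R.subtype.dualMap (snf.bM.coord (snf.f i)) = snf.a i • snf.bN.dualBasis i :=
  snf.bN.ext fun k => by
    classical
    simp only [LinearMap.dualMap_apply, subtype_apply, snf.snf, map_smul, Basis.coord_apply,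
      Basis.repr_self, LinearMap.smul_apply, Basis.dualBasis_apply_self, smul_eq_mul]
    rw [Finsupp.single_apply, snf.f.injective.eq_iff]
    split_ifs <;> simp_all

lemma dualMap_subtype_coord_mem (j : ι) :
    R.subtype.dualMap (snf.bM.coord j) ∈
      span ℤ (Set.range fun i => snf.a i • snf.bN.dualBasis i) := by
  rw [← snf.bN.dualBasis.sum_repr (R.subtype.dualMap _)]
  refine sum_mem fun k _ => ?_
  rw [Basis.dualBasis_repr, LinearMap.dualMap_apply, subtype_apply, snf.snf, map_smul,
    smul_eq_mul, mul_comm, mul_smul]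
  exact smul_mem _ _ (subset_span ⟨k, rfl⟩)

variable [Fintype ι]

lemma range_dualMap_subtype :
    LinearMap.range R.subtype.dualMap =
      span ℤ (Set.range fun i => snf.a i • snf.bN.dualBasis i) := by
  apply le_antisymm
  · rintro _ ⟨g, rfl⟩
    rw [← snf.bM.sum_dual_apply_smul_coord g, map_sum]
    exact sum_mem fun j _ => by
      rw [map_smul]
      exact smul_mem _ _ (snf.dualMap_subtype_coord_mem j)
  · refine span_le.2 (Set.range_subset_iff.2 fun i => ?_)
    exact ⟨_, snf.dualMap_subtype_coord_f i⟩

lemma index_range_dualMap_subtype :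
    (LinearMap.range R.subtype.dualMap).toAddSubgroup.index = ∏ i, (snf.a i).natAbs := by
  rw [snf.range_dualMap_subtype]
  exact index_span_smul_basis _ snf.a_ne_zero

end Module.Basis.SmithNormalForm

namespace Submodule

variable {L : Type} [AddCommGroup L] [Module.Free ℤ L] [Module.Finite ℤ L]

lemma index_range_dualMap_subtype (R : Submodule ℤ L) :
    (LinearMap.range R.subtype.dualMap).toAddSubgroup.index =
      R.toAddSubgroup.relIndex (saturation R).toAddSubgroup := by
  obtain ⟨n, snf⟩ := R.smithNormalForm (Module.Free.chooseBasis ℤ L)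
  rw [snf.index_range_dualMap_subtype, snf.relIndex_saturation]

lemma exists_saturation_sup_span_singleton_eq_top {R : Submodule ℤ L}
    (h : Module.finrank ℤ L = Module.finrank ℤ R + 1) :
    ∃ x, saturation R ⊔ span ℤ {x} = ⊤ := by
  classical
  obtain ⟨n, snf⟩ := R.smithNormalForm (Module.Free.chooseBasis ℤ L)
  rw [Module.finrank_eq_card_basis snf.bM, Module.finrank_eq_card_basis snf.bN,
    Fintype.card_fin] at h
  obtain ⟨j₀, hj₀⟩ : ∃ j₀, j₀ ∉ Set.range snf.f := by
    by_contra! hsurj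
    have := Fintype.card_le_of_surjective snf.f hsurj
    simp only [Fintype.card_fin] at this
    omega
  have hcover : insert j₀ (Finset.univ.map snf.f) = Finset.univ := by
    refine Finset.eq_univ_of_card _ ?_
    rw [Finset.card_insert_of_notMem (by simpa using hj₀), Finset.card_map, h,
      Finset.card_univ, Fintype.card_fin]
  refine ⟨snf.bM j₀, eq_top_iff.2 ?_⟩
  rw [← snf.bM.span_eq, span_le]
  rintro _ ⟨j, rfl⟩
  rcases Finset.mem_insert.1 (hcover ▸ Finset.mem_univ j) with rfl | hj
  · exact mem_sup_right (mem_span_singleton_self _)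
  · obtain ⟨i, -, rfl⟩ := Finset.mem_map.1 hj
    exact mem_sup_left (snf.saturation_eq ▸ subset_span ⟨i, rfl⟩)

end Submodule

lemma Nat.Prime.eq_of_sq_mul_eq_pow_three {p P β : ℕ} (hp : p.Prime) (hβ : β ∣ p)
    (h : P ^ 2 * β = p ^ 3) : P = p := by
  rcases (Nat.dvd_prime hp).1 hβ with rfl | rfl
  · exfalso
    have := congrArg (Nat.factorization · p) h
    simp only [mul_one, Nat.factorization_pow, Finsupp.coe_smul, Pi.smul_apply, smul_eq_mul,
      hp.factorization_self] at this
    omega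
  · exact (Nat.pow_left_injective two_ne_zero)
      (Nat.eq_of_mul_eq_mul_right hp.pos (by rw [h]; ring))

namespace LinearMap.BilinForm

open Submodule

variable {L : Type} [AddCommGroup L] (B : LinearMap.BilinForm ℤ L) (R : Submodule ℤ L)

lemma range_restrict_eq_map :
    LinearMap.range (B.restrict R) = R.map (R.subtype.dualMap ∘ₗ B) := by
  change LinearMap.range ((R.subtype.dualMap ∘ₗ B) ∘ₗ R.subtype) = _
  rw [LinearMap.range_comp, R.range_subtype]

variable [Module.Free ℤ L] [Module.Finite ℤ L]

lemma index_range_restrict (hB : Function.Surjective B) (hR : (B.restrict R).SeparatingLeft) :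
    (LinearMap.range (B.restrict R)).toAddSubgroup.index =
      R.toAddSubgroup.relIndex (saturation R).toAddSubgroup ^ 2 *
        (saturation R ⊔ LinearMap.ker (R.subtype.dualMap ∘ₗ B)).toAddSubgroup.index := by
  set K := LinearMap.ker (R.subtype.dualMap ∘ₗ B)
  have hrange : (LinearMap.range (R.subtype.dualMap ∘ₗ B)).toAddSubgroup.index =
      R.toAddSubgroup.relIndex (saturation R).toAddSubgroup := by
    rw [LinearMap.range_comp_of_range_eq_top _ (LinearMap.range_eq_top.2 hB)]
    exact R.index_range_dualMap_subtype
  have hdisj : Disjoint (saturation R) K :=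
    disjoint_saturation <| disjoint_def.2 fun x hxR hxK =>
      congrArg Subtype.val (hR ⟨x, hxR⟩ fun y => LinearMap.congr_fun hxK y)
  have hsup : (R ⊔ K).toAddSubgroup.index =
      R.toAddSubgroup.relIndex (saturation R).toAddSubgroup *
        (saturation R ⊔ K).toAddSubgroup.index := by
    rw [← AddSubgroup.relIndex_mul_index
      (toAddSubgroup_mono (sup_le_sup_right (le_saturation R) K))]
    simp only [sup_toAddSubgroup]
    rw [AddSubgroup.relIndex_sup_sup_of_disjoint (toAddSubgroup_mono (le_saturation R))
      (AddSubgroup.disjoint_def.2 fun hxR hxK => disjoint_def.1 hdisj _ hxR hxK)]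
  rw [range_restrict_eq_map, index_map, hsup, hrange]
  ring

lemma index_saturation_sup_ker_dvd (hR : Module.finrank ℤ L = Module.finrank ℤ R + 1) {m : ℕ}
    (hm : ∀ g : Module.Dual ℤ R, m • g ∈ LinearMap.range (B.restrict R)) :
    (saturation R ⊔ LinearMap.ker (R.subtype.dualMap ∘ₗ B)).toAddSubgroup.index ∣ m := by
  obtain ⟨x, hx⟩ := exists_saturation_sup_span_singleton_eq_top hR
  refine index_dvd_of_sup_span_singleton_eq_top (x := x)
    (top_le_iff.1 (hx ▸ sup_le_sup_right le_sup_left _)) ?_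
  have hmx :
      m • x ∈ comap (R.subtype.dualMap ∘ₗ B) (R.map (R.subtype.dualMap ∘ₗ B)) := by
    rw [mem_comap, map_nsmul, ← range_restrict_eq_map]
    exact hm _
  rw [comap_map_eq] at hmx
  exact sup_le_sup_right (le_saturation R) _ hmx

end LinearMap.BilinForm

theorem fake_plane_stmt0
    (L : Type) [AddCommGroup L] [Module.Free ℤ L] [Module.Finite ℤ L]
    (B : LinearMap.BilinForm ℤ L)
    (hrank : Module.finrank ℤ L = 10)
    (hunimod : Function.Bijective fun x : L => B x)
    (R : Submodule ℤ L)
    (hrankR : Module.finrank ℤ R = 9)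
    (hnd : ∀ x : R, (∀ y : R, B (x : L) (y : L) = 0) → x = 0)
    (hdisc : Nonempty (disc (B.restrict R) ≃+ (ZMod 7 × ZMod 7 × ZMod 7))) :
    R ≤ saturation R ∧
      Nat.card ((saturation R) ⧸ (R.comap (saturation R).subtype)) = 7 := by
  refine ⟨le_saturation R, ?_⟩
  obtain ⟨e⟩ := hdisc
  have hcard : Nat.card (disc (B.restrict R)) = 7 ^ 3 :=
    (Nat.card_congr e.toEquiv).trans (by simp)
  have h7 (d : disc (B.restrict R)) : 7 • d = 0 :=
    e.injective (by rw [map_nsmul, map_zero]; ext <;> simp [show (7 : ZMod 7) = 0 from rfl])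
  have hindex := B.index_range_restrict R hunimod.2 hnd
  rw [(B.restrict R).index_range_eq_card_disc hnd, hcard] at hindex
  exact Nat.prime_seven.eq_of_sq_mul_eq_pow_three
    (B.index_saturation_sup_ker_dvd R (by omega) ((B.restrict R).nsmul_mem_range hnd h7))
    hindex.symm
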